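/- Let G and H be finite connected simple graphs, each with at least two vertices, and suppose G has a unique minimal MEG-set (i.e. there is an MEG-set of G contained in every MEG-set of G). Then meg(G □ H) = meg(G)·|V(H)| + meg(H)·|V(G)| − meg(G)·meg(H). -/

import Mathlib

open SimpleGraph

/-- `S` is a monitoring edge-geodetic set (MEG-set) of `G`: for every edge `e` of `G`
there are `x, y ∈ S` whose distance in `G − e` differs from their distance in `G`
(including the case that they become disconnected in `G − e`). -/
def IsMEGSet {V : Type*} (G : SimpleGraph V) (S : Set V) : Prop :=
  ∀ e ∈ G.edgeSet, ∃ x ∈ S, ∃ y ∈ S,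
    ¬ (G.deleteEdges {e}).Reachable x y ∨ (G.deleteEdges {e}).dist x y ≠ G.dist x y

/-- The monitoring edge-geodetic number: the minimum cardinality of an MEG-set. -/
noncomputable def meg {V : Type*} [Fintype V] (G : SimpleGraph V) : ℕ :=
  sInf {n | ∃ S : Set V, IsMEGSet G S ∧ S.ncard = n}

/-- The strong product `G ⊠ H` of two simple graphs: `(a,b)` adjacent to `(c,d)` iff
`a = c` and `bd ∈ E(H)`, or `b = d` and `ac ∈ E(G)`, or `ac ∈ E(G)` and `bd ∈ E(H)`. -/
def strongProd {α β : Type*} (G : SimpleGraph α) (H : SimpleGraph β) :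
    SimpleGraph (α × β) where
  Adj x y := (x.1 = y.1 ∧ H.Adj x.2 y.2) ∨ (x.2 = y.2 ∧ G.Adj x.1 y.1) ∨
    (G.Adj x.1 y.1 ∧ H.Adj x.2 y.2)
  symm := ⟨fun x y => by
    rintro (⟨h1, h2⟩ | ⟨h1, h2⟩ | ⟨h1, h2⟩)
    · exact Or.inl ⟨h1.symm, h2.symm⟩
    · exact Or.inr (Or.inl ⟨h1.symm, h2.symm⟩)
    · exact Or.inr (Or.inr ⟨h1.symm, h2.symm⟩)⟩
  loopless := ⟨fun x => by
    rintro (⟨_, h⟩ | ⟨_, h⟩ | ⟨h, _⟩)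
    · exact H.irrefl h
    · exact G.irrefl h
    · exact G.irrefl h⟩

infixl:70 " ⊠ " => strongProd

/-!
Distances in `G □ H` add over the factors, so a geodesic between two vertices of one `G`-layer
never leaves it. Hence, if `(x, b)` and `(y, b')` monitor an edge of the layer `V × {c}`, then
`b = b' = c` (otherwise a geodesic running first along a `G`-layer and then along an `H`-layer
avoids the edge) and `x, y` monitor the projected edge in `G`. So every `G`-layer of an MEG-set
of `G □ H` is an MEG-set of `G`, hence contains the minimal MEG-set `S₀`, and every `H`-layer is
an MEG-set of `H`. Such a set therefore contains `S₀ × V(H)` and at least `meg H` vertices in every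
`H`-layer outside it, and `S₀ × V(H) ∪ V(G) × T`, for a minimum MEG-set `T` of `H`, attains this.
-/

theorem Set.ncard_eq_sum_ncard_fiber {V W : Type*} [Fintype V] [Fintype W] (M : Set (V × W)) :
    M.ncard = ∑ a : V, {b | (a, b) ∈ M}.ncard := by
  classical
  simp only [Set.ncard_eq_toFinset_card']
  rw [← Finset.card_sigma]
  exact Finset.card_equiv (Equiv.sigmaEquivProd V W).symm (by simp)

namespace SimpleGraph

variable {V V' W : Type*} {G : SimpleGraph V} {G' : SimpleGraph V'} {H : SimpleGraph W}

theorem Reachable.dist_map_le (f : G →g G') {x y : V} (h : G.Reachable x y) :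
    G'.dist (f x) (f y) ≤ G.dist x y := by
  obtain ⟨p, hp⟩ := h.exists_walk_length_eq_dist
  simpa [hp] using dist_le (p.map f)

def Monitors (G : SimpleGraph V) (e : Sym2 V) (x y : V) : Prop :=
  ∀ p : G.Walk x y, p.length = G.dist x y → e ∈ p.edges

theorem monitors_iff {e : Sym2 V} {x y : V} :
    G.Monitors e x y ↔
      ¬(G.deleteEdges {e}).Reachable x y ∨ (G.deleteEdges {e}).dist x y ≠ G.dist x y := by
  constructor
  · intro h
    by_contra! ⟨hr, hd⟩
    obtain ⟨w, hw⟩ := hr.exists_walk_length_eq_dist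
    have he := h (w.mapLe (G.deleteEdges_le _)) (by rw [Walk.length_mapLe, hw, hd])
    rw [Walk.edges_mapLe_eq_edges] at he
    simpa using w.edges_subset_edgeSet he
  · intro h p hp
    by_contra he
    have hr : (G.deleteEdges {e}).Reachable x y := ⟨p.toDeleteEdge e he⟩
    refine h.elim (· hr) fun hd => hd (le_antisymm ?_ (hr.dist_anti (G.deleteEdges_le _)))
    simpa [hp] using dist_le (p.toDeleteEdge e he)

theorem isMEGSet_iff {S : Set V} :
    IsMEGSet G S ↔ ∀ e ∈ G.edgeSet, ∃ x ∈ S, ∃ y ∈ S, G.Monitors e x y := by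
  simp only [IsMEGSet, monitors_iff]

theorem Adj.monitors {u v : V} (h : G.Adj u v) : G.Monitors s(u, v) u v :=
  monitors_iff.2 <| Or.inr fun hd => by
    rw [dist_eq_one_iff_adj.2 h, dist_eq_one_iff_adj, deleteEdges_adj] at hd
    exact hd.2 rfl

theorem isMEGSet_univ (G : SimpleGraph V) : IsMEGSet G Set.univ :=
  isMEGSet_iff.2 fun e he => by
    induction e using Sym2.ind with
    | _ u v => exact ⟨u, trivial, v, trivial, Adj.monitors he⟩

theorem Monitors.map_iso (φ : G ≃g G') {e : Sym2 V} {x y : V} (h : G.Monitors e x y) :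
    G'.Monitors (e.map φ) (φ x) (φ y) := by
  intro q hq
  let p : G.Walk x y :=
    (q.map φ.symm.toHom).copy (φ.symm_apply_apply x) (φ.symm_apply_apply y)
  have hp : p.length = q.length := by simp [p]
  have hgeod : p.length = G.dist x y :=
    le_antisymm (hp ▸ hq ▸ (Reachable.dist_map_le φ.toHom ⟨p⟩)) (dist_le p)
  obtain ⟨z, hz, rfl⟩ : ∃ z ∈ q.edges, z.map φ.symm = e := by
    simpa [p, Walk.edges_map] using h p hgeod
  simpa [Sym2.map_map, Function.comp_def] using hz

theorem IsMEGSet.comap_iso (φ : G ≃g G') {S : Set V'} (hS : IsMEGSet G' S) :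
    IsMEGSet G (φ ⁻¹' S) := by
  rw [isMEGSet_iff] at hS ⊢
  intro e he
  obtain ⟨x, hx, y, hy, hxy⟩ := hS (e.map φ) (φ.map_mem_edgeSet_iff.2 he)
  refine ⟨φ.symm x, by simpa using hx, φ.symm y, by simpa using hy, ?_⟩
  simpa [Sym2.map_map, Function.comp_def] using hxy.map_iso φ.symm

theorem dist_boxProd {x y : V × W} (hG : G.Reachable x.1 y.1) (hH : H.Reachable x.2 y.2) :
    (G □ H).dist x y = G.dist x.1 y.1 + H.dist x.2 y.2 := by
  rw [dist, dist, dist, edist_boxProd, ENat.toNat_add (edist_ne_top_iff_reachable.2 hG)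
    (edist_ne_top_iff_reachable.2 hH)]

namespace Walk

@[simp]
theorem length_boxProdLeft {a₁ a₂ : V} (p : G.Walk a₁ a₂) (b : W) :
    (p.boxProdLeft H b).length = p.length :=
  length_map _ _

@[simp]
theorem length_boxProdRight {b₁ b₂ : W} (q : H.Walk b₁ b₂) (a : V) :
    (q.boxProdRight G a).length = q.length :=
  length_map _ _

theorem edges_boxProdLeft {a₁ a₂ : V} (p : G.Walk a₁ a₂) (b : W) :
    (p.boxProdLeft H b).edges = p.edges.map (Sym2.map (·, b)) :=
  edges_map _ _

theorem edges_boxProdRight {b₁ b₂ : W} (q : H.Walk b₁ b₂) (a : V) :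
    (q.boxProdRight G a).edges = q.edges.map (Sym2.map (a, ·)) :=
  edges_map _ _

theorem mem_edges_boxProdLeft {a₁ a₂ u v : V} {b c : W} (p : G.Walk a₁ a₂) :
    s((u, c), (v, c)) ∈ (p.boxProdLeft H b).edges ↔ b = c ∧ s(u, v) ∈ p.edges := by
  rw [edges_boxProdLeft, List.mem_map]
  constructor
  · rintro ⟨z, hz, hzeq⟩
    induction z using Sym2.ind with
    | _ a a' =>
      simp only [Sym2.map_mk, Sym2.eq, Sym2.rel_iff', Prod.mk.injEq] at hzeq
      rcases hzeq with ⟨⟨rfl, rfl⟩, rfl, -⟩ | ⟨⟨rfl, rfl⟩, rfl, -⟩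
      · exact ⟨rfl, hz⟩
      · exact ⟨rfl, Sym2.eq_swap ▸ hz⟩
  · rintro ⟨rfl, h⟩
    exact ⟨_, h, rfl⟩

theorem fst_eq_of_mem_edges_boxProdRight {b₁ b₂ : W} {x y : V × W} (q : H.Walk b₁ b₂) (a : V)
    (h : s(x, y) ∈ (q.boxProdRight G a).edges) : x.1 = y.1 := by
  rw [edges_boxProdRight, List.mem_map] at h
  obtain ⟨z, -, hz⟩ := h
  induction z using Sym2.ind with
  | _ b b' =>
    simp only [Sym2.map_mk, Sym2.eq, Sym2.rel_iff'] at hz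
    rcases hz with ⟨rfl, rfl⟩ | ⟨rfl, rfl⟩ <;> rfl

theorem exists_fst_projection {x y : V × W} (w : (G □ H).Walk x y) :
    ∃ p : G.Walk x.1 y.1, p.length ≤ w.length ∧
      (w.length ≤ p.length → w.edges = p.edges.map (Sym2.map (·, x.2))) := by
  induction w with
  | nil => exact ⟨nil, le_rfl, fun _ => rfl⟩
  | @cons x m y h w ih =>
    obtain ⟨p, hle, hedges⟩ := ih
    rcases boxProd_adj.mp h with ⟨hG, h2⟩ | ⟨hH, h1⟩
    · refine ⟨p.cons hG, by simpa using hle, fun hl => ?_⟩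
      simp only [length_cons, edges_cons, List.map_cons, Sym2.map_mk] at hl ⊢
      rw [hedges (by omega), h2]
      congr 2
      exact Prod.ext rfl h2
    · exact ⟨p.copy h1.symm rfl, by simp; omega, fun hl => by simp at hl; omega⟩

end Walk

theorem Monitors.boxProdLeft {u v x y : V} (h : G.Monitors s(u, v) x y) (c : W) :
    (G □ H).Monitors s((u, c), (v, c)) (x, c) (y, c) := by
  intro w hw
  obtain ⟨p, hle, hedges⟩ := w.exists_fst_projection
  rw [dist_boxProd ⟨p⟩ (Reachable.refl c), dist_self, add_zero] at hw
  have hp : p.length = G.dist x y := le_antisymm (hw ▸ hle) (dist_le p)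
  rw [hedges (hw.trans hp.symm).le]
  exact List.mem_map_of_mem (h p hp)

theorem Monitors.boxProdRight {u v x y : W} (h : H.Monitors s(u, v) x y) (a : V) :
    (G □ H).Monitors s((a, u), (a, v)) (a, x) (a, y) :=
  (h.boxProdLeft a).map_iso (boxProdComm H G)

theorem IsMEGSet.boxProd {S : Set V} {T : Set W} (hS : IsMEGSet G S) (hT : IsMEGSet H T) :
    IsMEGSet (G □ H) (S ×ˢ Set.univ ∪ Set.univ ×ˢ T) := by
  rw [isMEGSet_iff] at hS hT ⊢
  intro e he
  induction e using Sym2.ind with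
  | _ z z' =>
    obtain ⟨a, b⟩ := z
    obtain ⟨a', b'⟩ := z'
    rcases boxProd_adj.mp he with ⟨hadj, rfl : b = b'⟩ | ⟨hadj, rfl : a = a'⟩
    · obtain ⟨x, hx, y, hy, hxy⟩ := hS s(a, a') hadj
      exact ⟨(x, b), .inl ⟨hx, trivial⟩, (y, b), .inl ⟨hy, trivial⟩, hxy.boxProdLeft b⟩
    · obtain ⟨x, hx, y, hy, hxy⟩ := hT s(b, b') hadj
      exact ⟨(a, x), .inr ⟨trivial, hx⟩, (a, y), .inr ⟨trivial, hy⟩, hxy.boxProdRight a⟩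

theorem IsMEGSet.of_boxProd_left (hG : G.Preconnected) (hH : H.Preconnected)
    {M : Set (V × W)} (hM : IsMEGSet (G □ H) M) (c : W) : IsMEGSet G {a | (a, c) ∈ M} := by
  rw [isMEGSet_iff] at hM ⊢
  intro e he
  induction e using Sym2.ind with
  | _ u v =>
    obtain ⟨⟨x, b⟩, hX, ⟨y, b'⟩, hY, hmon⟩ := hM s((u, c), (v, c))
      (boxProd_adj_left.2 he)
    obtain ⟨p, hp⟩ := (hG x y).exists_walk_length_eq_dist
    obtain ⟨q, hq⟩ := (hH b b').exists_walk_length_eq_dist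
    have hdist : (G □ H).dist (x, b) (y, b') = G.dist x y + H.dist b b' :=
      dist_boxProd (hG x y) (hH b b')
    have hb : b = c := by
      by_contra hb
      have := hmon ((p.boxProdLeft H b).append (q.boxProdRight G y))
        (by simp [hdist, hp, hq])
      rw [Walk.edges_append, List.mem_append, Walk.mem_edges_boxProdLeft] at this
      exact this.elim (fun h => hb h.1)
        fun h => he.ne (Walk.fst_eq_of_mem_edges_boxProdRight q y h)
    have hb' : b' = c := by
      by_contra hb'
      have := hmon ((q.boxProdRight G x).append (p.boxProdLeft H b'))
        (by simp [hdist, hp, hq, add_comm])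
      rw [Walk.edges_append, List.mem_append, Walk.mem_edges_boxProdLeft] at this
      exact this.elim (fun h => he.ne (Walk.fst_eq_of_mem_edges_boxProdRight q x h))
        fun h => hb' h.1
    subst hb hb'
    refine ⟨x, hX, y, hY, fun r hr => ?_⟩
    have := hmon (r.boxProdLeft H _) (by simp [hdist, hr])
    exact ((Walk.mem_edges_boxProdLeft r).1 this).2

theorem IsMEGSet.of_boxProd_right (hG : G.Preconnected) (hH : H.Preconnected)
    {M : Set (V × W)} (hM : IsMEGSet (G □ H) M) (a : V) : IsMEGSet H {b | (a, b) ∈ M} :=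
  (hM.comap_iso (boxProdComm H G)).of_boxProd_left hH hG a

section Finite

variable [Fintype V] [Fintype W]

theorem exists_isMEGSet_ncard_eq_meg (G : SimpleGraph V) :
    ∃ S : Set V, IsMEGSet G S ∧ S.ncard = meg G :=
  Nat.sInf_mem (s := {n | ∃ S : Set V, IsMEGSet G S ∧ S.ncard = n})
    ⟨_, Set.univ, isMEGSet_univ G, rfl⟩

theorem IsMEGSet.meg_le_ncard {S : Set V} (hS : IsMEGSet G S) : meg G ≤ S.ncard :=
  Nat.sInf_le ⟨S, hS, rfl⟩

theorem IsMEGSet.ncard_eq_meg {S : Set V} (hS : IsMEGSet G S)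
    (hmin : ∀ R : Set V, IsMEGSet G R → S ⊆ R) : S.ncard = meg G := by
  obtain ⟨R, hR, hRcard⟩ := exists_isMEGSet_ncard_eq_meg G
  exact le_antisymm (hRcard ▸ Set.ncard_le_ncard (hmin R hR)) hS.meg_le_ncard

theorem meg_boxProd_eq_ncard (hG : G.Preconnected) (hH : H.Preconnected) {S₀ : Set V}
    (hS₀ : IsMEGSet G S₀) (hmin : ∀ R : Set V, IsMEGSet G R → S₀ ⊆ R) {T : Set W}
    (hT : IsMEGSet H T) (hTcard : T.ncard = meg H) :
    meg (G □ H) = (S₀ ×ˢ Set.univ ∪ S₀ᶜ ×ˢ T).ncard := by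
  set M := S₀ ×ˢ Set.univ ∪ S₀ᶜ ×ˢ T
  have hM : IsMEGSet (G □ H) M := by
    convert hS₀.boxProd hT using 1
    ext ⟨a, b⟩
    by_cases ha : a ∈ S₀ <;> simp [M, ha]
  obtain ⟨N, hN, hNcard⟩ := exists_isMEGSet_ncard_eq_meg (G □ H)
  refine le_antisymm hM.meg_le_ncard ?_
  rw [← hNcard, Set.ncard_eq_sum_ncard_fiber, Set.ncard_eq_sum_ncard_fiber]
  refine Finset.sum_le_sum fun a _ => ?_
  by_cases ha : a ∈ S₀
  · exact Set.ncard_le_ncard fun b _ => hmin _ (hN.of_boxProd_left hG hH b) ha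
  · simpa [M, ha, hTcard] using (hN.of_boxProd_right hG hH a).meg_le_ncard

end Finite

end SimpleGraph

theorem Set.ncard_prod_univ_union_compl_prod {V W : Type*} [Finite V] [Finite W] (S : Set V)
    (T : Set W) :
    (S ×ˢ Set.univ ∪ Sᶜ ×ˢ T).ncard = S.ncard * Nat.card W + (Nat.card V - S.ncard) * T.ncard := by
  rw [Set.ncard_union_eq (Set.disjoint_prod.2 (.inl disjoint_compl_right)), Set.ncard_prod,
    Set.ncard_prod, Set.ncard_compl, Set.ncard_univ]

theorem meg_boxProd_of_uniqueMinimal_general {V W : Type*} [Fintype V] [Fintype W]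
    (G : SimpleGraph V) (H : SimpleGraph W)
    (hG : G.Connected) (hH : H.Connected)
    (hUnique : ∃ S₀ : Set V, IsMEGSet G S₀ ∧ ∀ R : Set V, IsMEGSet G R → S₀ ⊆ R) :
    meg (G □ H) =
      meg G * Fintype.card W + meg H * Fintype.card V - meg G * meg H := by
  obtain ⟨S₀, hS₀, hmin⟩ := hUnique
  obtain ⟨T, hT, hTcard⟩ := exists_isMEGSet_ncard_eq_meg H
  have hS₀card := hS₀.ncard_eq_meg hmin
  have hle : meg G * meg H ≤ Fintype.card V * meg H :=
    Nat.mul_le_mul_right _ (hS₀card ▸ Nat.card_eq_fintype_card (α := V) ▸ S₀.ncard_le_card)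
  rw [meg_boxProd_eq_ncard hG.preconnected hH.preconnected hS₀ hmin hT hTcard,
    Set.ncard_prod_univ_union_compl_prod, hS₀card, hTcard, Nat.card_eq_fintype_card,
    Nat.card_eq_fintype_card, Nat.sub_mul, mul_comm (meg H), Nat.add_sub_assoc hle]

theorem meg_boxProd_of_uniqueMinimal {V W : Type*} [Fintype V] [Fintype W]
    (G : SimpleGraph V) (H : SimpleGraph W)
    (hG : G.Connected) (hH : H.Connected)
    (hV : 1 < Fintype.card V) (hW : 1 < Fintype.card W)
    (hUnique : ∃ S₀ : Set V, IsMEGSet G S₀ ∧ ∀ R : Set V, IsMEGSet G R → S₀ ⊆ R) :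
    meg (G □ H) =
      meg G * Fintype.card W + meg H * Fintype.card V - meg G * meg H :=
  meg_boxProd_of_uniqueMinimal_general G H hG hH hUnique
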